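/- Let R be an alternative ring with nucleus N. Then [N, R] ⊆ N; that is, if n is in the nucleus and x in R, then n*x - x*n is in the nucleus. -/

import Mathlib

/-!
In an alternative ring the associator is alternating, so a left-nuclear `n` is nuclear in every
slot. Teichmüller's identity `associator_cocycle` then lets a nuclear factor move between slots:
`(a n, c, d) = (a, n c, d)` and `(a, b, c n) = (a, b, c) n`. Combined with the symmetries of the
associator these give `(n r, x, y) = (x, y, r) n = (r n, x, y)`, so `(n r - r n, x, y) = 0`.
-/

section Associator

variable {R : Type*} [NonUnitalNonAssocRing R]

theorem associator_swap_left (hl : ∀ x y : R, (x * x) * y = x * (x * y)) (a b c : R) :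
    associator b a c = -associator a b c := by
  have hsq : ∀ x : R, associator x x c = 0 := fun x => by rw [associator_apply, hl, sub_self]
  calc associator b a c
      = associator (a + b) (a + b) c - associator a a c - associator b b c - associator a b c := by
        simp only [associator_apply, add_mul, mul_add]; abel
    _ = -associator a b c := by rw [hsq, hsq, hsq]; abel

theorem associator_swap_right (hr : ∀ x y : R, (y * x) * x = y * (x * x)) (a b c : R) :
    associator a c b = -associator a b c := by
  have hsq : ∀ x : R, associator a x x = 0 := fun x => by rw [associator_apply, hr, sub_self]
  calc associator a c b
      = associator a (b + c) (b + c) - associator a b b - associator a c c - associator a b c := by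
        simp only [associator_apply, add_mul, mul_add]; abel
    _ = -associator a b c := by rw [hsq, hsq, hsq]; abel

theorem associator_rotate (hl : ∀ x y : R, (x * x) * y = x * (x * y))
    (hr : ∀ x y : R, (y * x) * x = y * (x * x)) (a b c : R) :
    associator b c a = associator a b c := by
  rw [associator_swap_right hr, associator_swap_left hl, neg_neg]

theorem associator_mul_right_of_right_eq_zero {n : R} (hn : ∀ x y : R, associator x y n = 0)
    (a b c : R) : associator a b (c * n) = associator a b c * n := by
  have h := associator_cocycle a b c n
  rw [hn, hn, hn, mul_zero] at h
  exact neg_add_eq_zero.mp (by simpa using h)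

theorem associator_mul_left_eq_mid_mul {n : R} (hn₁ : ∀ x y : R, associator n x y = 0)
    (hn₂ : ∀ x y : R, associator x n y = 0) (a c d : R) :
    associator (a * n) c d = associator a (n * c) d := by
  have h := associator_cocycle a n c d
  rw [hn₁, hn₂, hn₂, mul_zero, zero_mul, add_zero] at h
  exact neg_add_eq_zero.mp (by simpa using h)

variable {n : R}

theorem associator_mid_eq_zero_of_left (hl : ∀ x y : R, (x * x) * y = x * (x * y))
    (hn : ∀ x y : R, associator n x y = 0) (a b : R) : associator a n b = 0 := by
  rw [associator_swap_left hl, hn, neg_zero]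

theorem associator_right_eq_zero_of_left (hl : ∀ x y : R, (x * x) * y = x * (x * y))
    (hr : ∀ x y : R, (y * x) * x = y * (x * x)) (hn : ∀ x y : R, associator n x y = 0)
    (a b : R) : associator a b n = 0 := by
  rw [associator_rotate hl hr, hn]

theorem associator_mul_comm_of_nucleus (hl : ∀ x y : R, (x * x) * y = x * (x * y))
    (hr : ∀ x y : R, (y * x) * x = y * (x * x)) (hn : ∀ x y : R, associator n x y = 0)
    (r x y : R) : associator (n * r) x y = associator (r * n) x y := by
  have hn₂ := associator_mid_eq_zero_of_left hl hn
  have hn₃ := associator_right_eq_zero_of_left hl hr hn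
  calc associator (n * r) x y
      = -associator x (n * r) y := by rw [associator_swap_left hl]
    _ = -associator (x * n) r y := by rw [associator_mul_left_eq_mid_mul hn hn₂]
    _ = -associator r y (x * n) := by rw [associator_rotate hl hr (x * n) r y]
    _ = -(associator r y x * n) := by rw [associator_mul_right_of_right_eq_zero hn₃]
    _ = associator x y r * n := by
      rw [associator_swap_right hr, neg_mul, neg_neg, associator_rotate hl hr r x y]
    _ = associator x y (r * n) := (associator_mul_right_of_right_eq_zero hn₃ x y r).symm
    _ = associator (r * n) x y := associator_rotate hl hr _ _ _

end Associator

theorem stmt_6 {R : Type*} [NonUnitalNonAssocRing R]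
    (hl : ∀ x y : R, (x*x)*y = x*(x*y))
    (hr : ∀ x y : R, (y*x)*x = y*(x*x))
    (n : R) (hn : ∀ x y : R, (n*x)*y = n*(x*y)) :
    ∀ r x y : R, ((n*r - r*n)*x)*y = (n*r - r*n)*(x*y) := by
  intro r x y
  have hnuc : ∀ x y : R, associator n x y = 0 := fun x y => by
    rw [associator_apply, hn, sub_self]
  have hsub :
      associator (n * r - r * n) x y = associator (n * r) x y - associator (r * n) x y := by
    simp only [associator_apply, sub_mul]; abel
  rw [← sub_eq_zero, ← associator_apply, hsub, associator_mul_comm_of_nucleus hl hr hnuc,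
    sub_self]
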